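/- Let B ∈ ℝ^{m×s}, A ∈ ℝ^{m×k}, n ∈ ℝ^m, z ∈ Δ^k, and f satisfy the standard assumption. Then f(R_B^f(Az + n)) ≤ f(R_B^f(Az) + n) and f(R_B^f(Az + n)) ≤ f(R_B^f(A)z + n). -/

import Mathlib

noncomputable section

open scoped BigOperators

abbrev E (m : ℕ) := EuclideanSpace ℝ (Fin m)

def toE {m : ℕ} (x : Fin m → ℝ) : E m := WithLp.toLp 2 x

/-- The unit simplex `Δ = {y | y ≥ 0, ∑ y ≤ 1}`. -/
def simplex (n : Type*) [Fintype n] : Set (n → ℝ) :=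
  {y | (∀ i, 0 ≤ y i) ∧ ∑ i, y i ≤ 1}

/-- Assumption 2 of the paper: `f` is `μ`-strongly convex with `L`-Lipschitz
gradient `f'`, and `0` is its global minimizer with `f 0 = 0`. -/
structure GoodF {m : ℕ} (f : E m → ℝ) (f' : E m → E m) (μ L : ℝ) : Prop where
  mu_pos : 0 < μ
  grad : ∀ x, HasGradientAt f (f' x) x
  lip : ∀ x y : E m, ‖f' x - f' y‖ ≤ L * ‖x - y‖
  sconv : ∀ x y : E m, ∀ δ : ℝ, 0 ≤ δ → δ ≤ 1 →
    f (δ • x + (1 - δ) • y) ≤ δ * f x + (1 - δ) * f y - μ / 2 * δ * (1 - δ) * ‖x - y‖ ^ 2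
  f_zero : f 0 = 0
  min_zero : ∀ x, f 0 ≤ f x

/-- A minimizer over the unit simplex of `y ↦ f (x - B y)` (chosen via choice). -/
def argminSimplex {m : ℕ} {n : Type*} [Fintype n] (f : E m → ℝ)
    (B : Matrix (Fin m) n ℝ) (x : E m) : n → ℝ :=
  Classical.epsilon fun y => y ∈ simplex n ∧
    ∀ z ∈ simplex n, f (x - toE (B.mulVec y)) ≤ f (x - toE (B.mulVec z))

/-- The residual `R_B^f(x) = x - B y*` where `y* = argmin_{y ∈ Δ} f (x - B y)`. -/
def resid {m : ℕ} {n : Type*} [Fintype n] (f : E m → ℝ)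
    (B : Matrix (Fin m) n ℝ) (x : E m) : E m :=
  x - toE (B.mulVec (argminSimplex f B x))

/-- Column-wise residual matrix `R_B^f(A)`. -/
def residMat {m : ℕ} {n k : Type*} [Fintype n] (f : E m → ℝ)
    (B : Matrix (Fin m) n ℝ) (A : Matrix (Fin m) k ℝ) : Matrix (Fin m) k ℝ :=
  fun i j => resid f B (toE fun i' => A i' j) i

/-- `‖N‖_{1,2}`: the maximum `ℓ₂` column norm. -/
def norm12 {m : ℕ} {n : Type*} [Fintype n] (N : Matrix (Fin m) n ℝ) : ℝ :=
  sSup {c | ∃ j, c = ‖toE fun i => N i j‖}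

/-- `α(W)`: minimum distance between a column of `W` and the convex hull of the
other columns of `W` and the origin. -/
def alpha {m r : ℕ} (W : Matrix (Fin m) (Fin r) ℝ) : ℝ :=
  sInf {c | ∃ (j : Fin r) (x : Fin r → ℝ), x ∈ simplex (Fin r) ∧ x j = 0 ∧
    c = ‖toE (fun i => W i j) - toE (W.mulVec x)‖}

/-- `σ(W)`: smallest singular value (`min_{‖z‖₂ ≥ 1} ‖Wz‖₂`) if `m ≥ r`, and `0` if `m < r`. -/
def smin {m r : ℕ} (W : Matrix (Fin m) (Fin r) ℝ) : ℝ :=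
  if r ≤ m then sInf {c | ∃ z : Fin r → ℝ, 1 ≤ ‖toE z‖ ∧ c = ‖toE (W.mulVec z)‖} else 0

/-- `[B, x]`: append the column `x` to `B`. -/
def appendCol {m s : ℕ} (B : Matrix (Fin m) (Fin s) ℝ) (x : E m) :
    Matrix (Fin m) (Fin (s + 1)) ℝ :=
  fun i => Fin.snoc (fun j => B i j) (x i)

/-- `[A, B]`: horizontal concatenation. -/
def appendMat {m k s : ℕ} (A : Matrix (Fin m) (Fin k) ℝ) (B : Matrix (Fin m) (Fin s) ℝ) :
    Matrix (Fin m) (Fin (k + s)) ℝ :=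
  fun i => Fin.append (fun j => A i j) (fun j => B i j)

/-- `ω(P) = min (min_i ‖p_i‖₂, (1/√2) min_{i ≠ j} ‖p_i - p_j‖₂)`. -/
def omegaM {m : ℕ} {k : Type*} [Fintype k] (P : Matrix (Fin m) k ℝ) : ℝ :=
  sInf ({c | ∃ i, c = ‖toE fun a => P a i‖} ∪
    {c | ∃ i j, i ≠ j ∧ c = (Real.sqrt 2)⁻¹ * ‖(toE fun a => P a i) - toE fun a => P a j‖})

/-- `β(W) = min (ν_β(W), γ_β(W)/√2)` as in the paper. -/
def beta {m r : ℕ} (f : E m → ℝ) (W : Matrix (Fin m) (Fin r) ℝ) : ℝ :=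
  sInf ({c | ∃ j : Fin r,
      c = ‖resid f (W.submatrix id fun p : {i // i ≠ j} => (p : Fin r)) (toE fun a => W a j)‖} ∪
    {c | ∃ (i j : Fin r) (J : Finset (Fin r)), i ≠ j ∧ i ∉ J ∧ j ∉ J ∧
      c = (Real.sqrt 2)⁻¹ *
        ‖resid f (W.submatrix id fun p : J => (p : Fin r)) (toE fun a => W a i) -
         resid f (W.submatrix id fun p : J => (p : Fin r)) (toE fun a => W a j)‖})

theorem Matrix.isHermitian_transpose_mul_self {m n : Type*} [Fintype m]
    (A : Matrix m n ℝ) : (Matrix.transpose A * A).IsHermitian := by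
  rw [Matrix.IsHermitian, Matrix.conjTranspose_mul, Matrix.conjTranspose_eq_transpose_of_trivial,
    Matrix.conjTranspose_eq_transpose_of_trivial, Matrix.transpose_transpose]

/-- Singular values of `B` in nonincreasing order (`i`-th largest at index `i`). -/
def singVals {m s : ℕ} (B : Matrix (Fin m) (Fin s) ℝ) : Fin s → ℝ := fun i =>
  Real.sqrt (((Matrix.isHermitian_transpose_mul_self B).eigenvalues ∘
    Tuple.sort (Matrix.isHermitian_transpose_mul_self B).eigenvalues) i.rev)

/-- The spectral norm `‖N‖₂` (ℓ₂ operator norm). -/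
def spec {m s : ℕ} (N : Matrix (Fin m) (Fin s) ℝ) : ℝ :=
  ‖LinearMap.toContinuousLinearMap (Matrix.toEuclideanLin N)‖

/-
The residual at `A z + n` minimizes `f` over all points `A z + n - B y` with `y ∈ Δ`. Both
right-hand sides are such points: for the first take `y` the minimizer at `A z`; for the second
take `y = Y z`, where the columns of `Y` are the minimizers at the columns of `A`, since
`R_B^f(A) z = A z - B (Y z)` and `Y z ∈ Δ`.
-/

open scoped Matrix

lemma simplex_isCompact (n : Type*) [Fintype n] : IsCompact (simplex n) := by
  have hsub : simplex n ⊆ Set.Icc 0 1 := fun y ⟨hy0, hy1⟩ =>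
    ⟨hy0, fun i => (Finset.single_le_sum (fun j _ => hy0 j) (Finset.mem_univ i)).trans hy1⟩
  have hclosed : IsClosed (simplex n) :=
    (isClosed_le continuous_const continuous_id).inter
      (isClosed_le (continuous_finsetSum _ fun i _ => continuous_apply i) continuous_const)
  exact isCompact_Icc.of_isClosed_subset hclosed hsub

lemma zero_mem_simplex (n : Type*) [Fintype n] : (0 : n → ℝ) ∈ simplex n :=
  ⟨fun _ => le_rfl, by simp⟩

lemma mulVec_mem_simplex {n k : Type*} [Fintype n] [Fintype k] {Y : Matrix n k ℝ}
    (hY : ∀ j, (fun i => Y i j) ∈ simplex n) {z : k → ℝ} (hz : z ∈ simplex k) :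
    Y *ᵥ z ∈ simplex n := by
  refine ⟨fun i => Finset.sum_nonneg fun j _ => mul_nonneg ((hY j).1 i) (hz.1 j), ?_⟩
  calc ∑ i, (Y *ᵥ z) i = ∑ j, (∑ i, Y i j) * z j := by
        simp only [Matrix.mulVec, dotProduct, Finset.sum_mul]
        exact Finset.sum_comm
    _ ≤ ∑ j, z j := Finset.sum_le_sum fun j _ => mul_le_of_le_one_left (hz.1 j) (hY j).2
    _ ≤ 1 := hz.2

section Residual

variable {m : ℕ} {n : Type*} [Fintype n] {f : E m → ℝ}

lemma argminSimplex_spec (hf : Continuous f) (B : Matrix (Fin m) n ℝ) (x : E m) :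
    argminSimplex f B x ∈ simplex n ∧
      ∀ y ∈ simplex n, f (resid f B x) ≤ f (x - toE (B *ᵥ y)) := by
  have hcont : Continuous fun y : n → ℝ => f (x - toE (B *ᵥ y)) :=
    hf.comp (continuous_const.sub
      ((PiLp.continuous_toLp 2 _).comp (Matrix.mulVecLin B).continuous_of_finiteDimensional))
  obtain ⟨y₀, hy₀, hmin⟩ :=
    (simplex_isCompact n).exists_isMinOn ⟨0, zero_mem_simplex n⟩ hcont.continuousOn
  exact Classical.epsilon_spec (p := fun y => y ∈ simplex n ∧
    ∀ z ∈ simplex n, f (x - toE (B *ᵥ y)) ≤ f (x - toE (B *ᵥ z))) ⟨y₀, hy₀, hmin⟩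

def argminSimplexCols {k : Type*} (f : E m → ℝ) (B : Matrix (Fin m) n ℝ)
    (A : Matrix (Fin m) k ℝ) : Matrix n k ℝ :=
  fun i j => argminSimplex f B (toE fun i' => A i' j) i

lemma residMat_eq_sub_mul {k : Type*} (B : Matrix (Fin m) n ℝ) (A : Matrix (Fin m) k ℝ) :
    residMat f B A = A - B * argminSimplexCols f B A := by
  ext i j
  simp [residMat, resid, argminSimplexCols, toE, Matrix.mul_apply, Matrix.mulVec, dotProduct]

end Residual

theorem stmt12 (m s k : ℕ) (μ L : ℝ) (f : E m → ℝ) (f' : E m → E m) (hf : GoodF f f' μ L)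
    (B : Matrix (Fin m) (Fin s) ℝ) (A : Matrix (Fin m) (Fin k) ℝ) (n : E m)
    (z : Fin k → ℝ) (hz : z ∈ simplex (Fin k)) :
    f (resid f B (toE (A.mulVec z) + n)) ≤ f (resid f B (toE (A.mulVec z)) + n) ∧
    f (resid f B (toE (A.mulVec z) + n)) ≤ f (toE ((residMat f B A).mulVec z) + n) := by
  have hcont : Continuous f := continuous_iff_continuousAt.2 fun x => (hf.grad x).continuousAt
  have hmin := (argminSimplex_spec hcont B (toE (A *ᵥ z) + n)).2
  constructor
  · convert hmin _ (argminSimplex_spec hcont B (toE (A *ᵥ z))).1 using 2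
    rw [resid]
    abel
  · have hYz : argminSimplexCols f B A *ᵥ z ∈ simplex (Fin s) :=
      mulVec_mem_simplex (fun j => (argminSimplex_spec hcont B _).1) hz
    convert hmin _ hYz using 2
    rw [residMat_eq_sub_mul, Matrix.sub_mulVec, ← Matrix.mulVec_mulVec, toE, toE, toE,
      WithLp.toLp_sub]
    abel
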